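/- arXiv:1305.1905 — 3 statements merged into one kernel-verified Lean document; each statement's English description precedes it below -/
import Mathlib

section
/- Let a ∈ (0,1). Then there exists a function F : ℝ → ℝ which is continuously differentiable (C¹) on all of ℝ, infinitely differentiable on the open interval (1,2), and satisfies: 0 ≤ F(σ) ≤ 1 for all σ ∈ ℝ; F(σ) = 0 for all σ ≤ a; F(σ) = f_a(σ) for all σ ∈ [a,1]; F(σ) = 1 for all σ ≥ 2; and F is concave on the interval [1,2]. -/
/-- The flux function `f_a`, defined for `a ∈ (0,1)` by
`f_a(σ) = (1/log(1/a)) * (σ*(log σ - log a) - (σ - a))`. -/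
noncomputable def fluxFn (a : ℝ) : ℝ → ℝ :=
  fun σ => (1 / Real.log (1 / a)) * (σ * (Real.log σ - Real.log a) - (σ - a))

theorem stmt_3 (a : ℝ) (ha : a ∈ Set.Ioo (0 : ℝ) 1) :
    ∃ F : ℝ → ℝ,
      ContDiff ℝ 1 F ∧
      ContDiffOn ℝ (⊤ : ℕ∞) F (Set.Ioo (1 : ℝ) 2) ∧
      (∀ σ : ℝ, 0 ≤ F σ ∧ F σ ≤ 1) ∧
      (∀ σ : ℝ, σ ≤ a → F σ = 0) ∧
      (∀ σ ∈ Set.Icc a (1 : ℝ), F σ = fluxFn a σ) ∧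
      (∀ σ : ℝ, 2 ≤ σ → F σ = 1) ∧
      ConcaveOn ℝ (Set.Icc (1 : ℝ) 2) F := by
  obtain ⟨ha0, ha1⟩ := ha
  set L : ℝ := Real.log (1 / a) with hLdef
  have hlog : L = -Real.log a := by rw [hLdef, one_div, Real.log_inv]
  have hLa : 1 - a < L := by
    have := Real.log_lt_sub_one_of_pos ha0 (ne_of_lt ha1)
    rw [hlog]; linarith
  have hL0 : 0 < L := by linarith
  set q : ℝ := L / (1 - a) with hqdef
  have hq1 : 1 < q := (one_lt_div (by linarith)).2 hLa
  have hq0 : 0 < q := by linarith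
  have hla : Real.log a ≠ 0 := by
    have := Real.log_neg ha0 ha1; linarith
  -- derivative function
  set g : ℝ → ℝ := fun σ =>
    if σ ≤ 1 then (Real.log (max σ a) - Real.log a) / L else (max (2 - σ) 0) ^ (q - 1)
    with hgdef
  have hg_cont : Continuous g := by
    apply Continuous.if_le
    · apply Continuous.div_const
      apply Continuous.sub _ continuous_const
      refine continuous_iff_continuousAt.2 fun x => ?_
      exact ((continuous_id.max continuous_const).continuousAt).log
        (by positivity : max x a ≠ 0)
    · exact ((continuous_const.sub continuous_id).max continuous_const).rpow_const
        fun x => Or.inr (by linarith)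
    · exact continuous_id
    · exact continuous_const
    · intro x hx
      subst hx
      rw [max_eq_left ha1.le, max_eq_left (by norm_num : (0:ℝ) ≤ 2 - 1), Real.log_one]
      rw [show (2:ℝ) - 1 = 1 by norm_num, Real.one_rpow]
      rw [hlog]; field_simp [hla]; ring
  have hgnn : ∀ σ, 0 ≤ g σ := by
    intro σ
    rw [hgdef]
    dsimp only
    split_ifs with h
    · apply div_nonneg _ hL0.le
      have := Real.log_le_log ha0 (le_max_right σ a)
      linarith
    · exact Real.rpow_nonneg (le_max_right _ _) _
  set F : ℝ → ℝ := fun σ => ∫ t in a..σ, g t with hFdef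
  have hF' : ∀ σ, HasDerivAt F (g σ) σ := fun σ =>
    (hg_cont.integral_hasStrictDerivAt a σ).hasDerivAt
  have hdiff : Differentiable ℝ F := fun σ => (hF' σ).differentiableAt
  have hdF : deriv F = g := funext fun σ => (hF' σ).deriv
  have hmono : Monotone F := by
    apply monotone_of_deriv_nonneg hdiff
    rw [hdF]; exact hgnn
  -- F vanishes below a
  have hFlea : ∀ σ : ℝ, σ ≤ a → F σ = 0 := by
    intro σ hσ
    have : Set.EqOn g (fun _ => (0:ℝ)) (Set.uIcc a σ) := by
      intro t ht
      rw [Set.uIcc_of_ge hσ] at ht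
      have ht1 : t ≤ 1 := le_trans ht.2 ha1.le
      have hta : t ≤ a := ht.2
      simp only [hgdef, if_pos ht1, max_eq_right hta, sub_self, zero_div]
    rw [hFdef]
    simp only
    rw [intervalIntegral.integral_congr this, intervalIntegral.integral_const, smul_zero]
  -- F = fluxFn on [a,1]
  have hflux : ∀ σ ∈ Set.Icc a (1:ℝ), F σ = fluxFn a σ := by
    intro σ hσ
    have hder : ∀ t ∈ Set.uIcc a σ, HasDerivAt (fluxFn a) (g t) t := by
      intro t ht
      rw [Set.uIcc_of_le hσ.1] at ht
      have ht0 : 0 < t := lt_of_lt_of_le ha0 ht.1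
      have h1 : HasDerivAt (fun x : ℝ => x * (Real.log x - Real.log a) - (x - a))
          ((1 * (Real.log t - Real.log a) + t * t⁻¹) - 1) t := by
        exact (((hasDerivAt_id t).mul ((Real.hasDerivAt_log ht0.ne').sub_const _)).sub
          ((hasDerivAt_id t).sub_const a))
      have h2 : HasDerivAt (fluxFn a) (1 / L * ((1 * (Real.log t - Real.log a) + t * t⁻¹) - 1)) t :=
        h1.const_mul (1 / L)
      convert h2 using 1
      have ht1 : t ≤ 1 := le_trans ht.2 hσ.2
      simp only [hgdef, if_pos ht1, max_eq_left ht.1]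
      rw [mul_inv_cancel₀ ht0.ne']
      field_simp
      ring
    have := intervalIntegral.integral_eq_sub_of_hasDerivAt hder
      (hg_cont.intervalIntegrable a σ)
    rw [hFdef]
    simp only
    rw [this]
    have : fluxFn a a = 0 := by simp [fluxFn]
    rw [this, sub_zero]
  have hflux1 : fluxFn a 1 = 1 - 1 / q := by
    rw [fluxFn]
    simp only [Real.log_one, one_mul, zero_sub]
    rw [hqdef, one_div_div]
    rw [← hLdef, hlog]
    field_simp [hla]
    ring
  -- explicit formula on [1,2]
  have hform : ∀ σ ∈ Set.Icc (1:ℝ) 2, F σ = 1 - (2 - σ) ^ q / q := by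
    intro σ hσ
    have hEq : Set.EqOn g (fun t => (2 - t) ^ (q - 1)) (Set.uIcc 1 σ) := by
      intro t ht
      rw [Set.uIcc_of_le hσ.1] at ht
      have ht2 : t ≤ 2 := le_trans ht.2 hσ.2
      by_cases h1 : t ≤ 1
      · have : t = 1 := le_antisymm h1 ht.1
        subst this
        simp only [hgdef, if_pos le_rfl, max_eq_left ha1.le, Real.log_one, zero_sub]
        rw [show (2:ℝ) - 1 = 1 by norm_num, Real.one_rpow, hlog]
        field_simp [hla]
      · simp only [hgdef, if_neg h1, max_eq_left (by linarith : (0:ℝ) ≤ 2 - t)]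
    have hcont : ContinuousOn (fun t : ℝ => -(2 - t) ^ q / q) (Set.Icc 1 σ) := by
      apply Continuous.continuousOn
      exact (((continuous_const.sub continuous_id).rpow_const
        fun x => Or.inr hq0.le).neg).div_const q
    have hder : ∀ t ∈ Set.Ioo (1:ℝ) σ, HasDerivAt (fun t : ℝ => -(2 - t) ^ q / q)
        ((2 - t) ^ (q - 1)) t := by
      intro t ht
      have ht2 : t < 2 := lt_of_lt_of_le ht.2 hσ.2
      have hb : (0:ℝ) < 2 - t := by linarith
      have hr : HasDerivAt (fun y : ℝ => y ^ q) (q * (2 - t) ^ (q - 1)) (2 - t) :=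
        Real.hasDerivAt_rpow_const (Or.inl hb.ne')
      have hbase : HasDerivAt (fun t : ℝ => 2 - t) (-1) t := by
        simpa using (hasDerivAt_id t).const_sub (2:ℝ)
      have : HasDerivAt (fun t : ℝ => -(2 - t) ^ q / q) (-(q * (2 - t) ^ (q - 1) * -1) / q) t :=
        ((hr.comp t hbase).neg).div_const q
      convert this using 1
      field_simp
    have hint := intervalIntegral.integral_eq_sub_of_hasDerivAt_of_le hσ.1 hcont hder
      (((continuous_const.sub continuous_id).rpow_const
        fun x => Or.inr (by linarith)).intervalIntegrable 1 σ)
    have hsplit : F σ = F 1 + ∫ t in (1:ℝ)..σ, g t := by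
      rw [hFdef]
      simp only
      rw [intervalIntegral.integral_add_adjacent_intervals
        (hg_cont.intervalIntegrable a 1) (hg_cont.intervalIntegrable 1 σ)]
    rw [hsplit, hflux 1 ⟨ha1.le, le_rfl⟩, hflux1,
      intervalIntegral.integral_congr hEq, hint]
    rw [show (2:ℝ) - 1 = 1 by norm_num, Real.one_rpow]
    ring
  have hF2 : F 2 = 1 := by
    have := hform 2 ⟨by norm_num, le_rfl⟩
    rw [this, sub_self, Real.zero_rpow hq0.ne', zero_div, sub_zero]
  have hFge2 : ∀ σ : ℝ, 2 ≤ σ → F σ = 1 := by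
    intro σ hσ
    have hEq : Set.EqOn g (fun _ => (0:ℝ)) (Set.uIcc 2 σ) := by
      intro t ht
      rw [Set.uIcc_of_le hσ] at ht
      have h1 : ¬ t ≤ 1 := by
        have := ht.1; push_neg; linarith
      simp only [hgdef, if_neg h1, max_eq_right (by linarith [ht.1] : 2 - t ≤ 0),
        Real.zero_rpow (by linarith : q - 1 ≠ 0)]
    have hsplit : F σ = F 2 + ∫ t in (2:ℝ)..σ, g t := by
      rw [hFdef]
      simp only
      rw [intervalIntegral.integral_add_adjacent_intervals
        (hg_cont.intervalIntegrable a 2) (hg_cont.intervalIntegrable 2 σ)]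
    rw [hsplit, hF2, intervalIntegral.integral_congr hEq,
      intervalIntegral.integral_const, smul_zero, add_zero]
  refine ⟨F, ?_, ?_, ?_, hFlea, hflux, hFge2, ?_⟩
  · exact contDiff_one_iff_deriv.2 ⟨hdiff, hdF ▸ hg_cont⟩
  · have hφ : ContDiffOn ℝ (⊤ : ℕ∞) (fun σ : ℝ => 1 - (2 - σ) ^ q / q) (Set.Ioo 1 2) := by
      intro σ hσ
      have hb : (0:ℝ) < 2 - σ := by linarith [hσ.2]
      have h1 : ContDiffAt ℝ (⊤ : ℕ∞) (fun y : ℝ => y ^ q) (2 - σ) :=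
        Real.contDiffAt_rpow_const_of_ne hb.ne'
      have h2 : ContDiffAt ℝ (⊤ : ℕ∞) (fun σ : ℝ => (2 - σ) ^ q) σ :=
        h1.comp σ ((contDiff_const.sub contDiff_id).contDiffAt)
      exact ((contDiffAt_const.sub (h2.div_const q)).contDiffWithinAt)
    exact hφ.congr fun σ hσ => hform σ ⟨hσ.1.le, hσ.2.le⟩
  · intro σ
    constructor
    · rcases le_or_gt σ a with h | h
      · rw [hFlea σ h]
      · rw [← hFlea a le_rfl]; exact hmono h.le
    · rcases le_or_gt 2 σ with h | h
      · rw [hFge2 σ h]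
      · rw [← hF2]; exact hmono h.le
  · apply AntitoneOn.concaveOn_of_deriv (convex_Icc 1 2)
      (hdiff.continuous.continuousOn) (hdiff.differentiableOn)
    rw [interior_Icc, hdF]
    intro x hx y hy hxy
    have hx1 : ¬ x ≤ 1 := by push_neg; exact hx.1
    have hy1 : ¬ y ≤ 1 := by push_neg; exact hy.1
    simp only [hgdef, if_neg hx1, if_neg hy1,
      max_eq_left (by linarith [hx.2] : (0:ℝ) ≤ 2 - x),
      max_eq_left (by linarith [hy.2] : (0:ℝ) ≤ 2 - y)]
    exact Real.rpow_le_rpow (by linarith [hy.2]) (by linarith) (by linarith)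
end

section
/- Let γ ∈ (0,1/2) and let a ∈ (0, e^{-2}). Then ∫_{e²a}^{1} σ^{γ−1} · (σ·(log σ − log a) − (σ − a))^{−γ} dσ ≤ (2^γ/(1−γ)) · (log(1/a))^{1−γ}. -/
open MeasureTheory

theorem stmt_6 (γ a : ℝ) (hγ : γ ∈ Set.Ioo (0 : ℝ) (1 / 2))
    (ha : a ∈ Set.Ioo (0 : ℝ) (Real.exp (-2))) :
    MeasureTheory.IntegrableOn
      (fun σ : ℝ => σ ^ (γ - 1) * (σ * (Real.log σ - Real.log a) - (σ - a)) ^ (-γ))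
      (Set.Ioo (Real.exp 2 * a) 1) ∧
    ∫ σ in Set.Ioo (Real.exp 2 * a) 1,
        σ ^ (γ - 1) * (σ * (Real.log σ - Real.log a) - (σ - a)) ^ (-γ)
      ≤ (2 ^ γ / (1 - γ)) * Real.log (1 / a) ^ (1 - γ) := by
  obtain ⟨hγ0, hγ2⟩ := hγ
  obtain ⟨ha0, haE⟩ := ha
  have hγ1 : γ < 1 := hγ2.trans (by norm_num)
  have h1γ : (0:ℝ) < 1 - γ := by linarith
  set b : ℝ := Real.exp 2 * a with hbdef
  have hb0 : 0 < b := mul_pos (Real.exp_pos 2) ha0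
  have hb1 : b < 1 := by
    have : Real.exp 2 * a < Real.exp 2 * Real.exp (-2) :=
      (mul_lt_mul_iff_right₀ (Real.exp_pos 2)).2 haE
    rwa [← Real.exp_add, show (2:ℝ) + -2 = 0 by norm_num, Real.exp_zero] at this
  have hlogb : Real.log b = 2 + Real.log a := by
    rw [hbdef, Real.log_mul (Real.exp_pos 2).ne' ha0.ne', Real.log_exp]
  have hL : ∀ σ ∈ Set.Icc b 1, 2 ≤ Real.log σ - Real.log a := by
    intro σ hσ
    have h := Real.log_le_log hb0 hσ.1
    linarith
  set c : ℝ := 2 ^ γ / (1 - γ) with hcdef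
  have hc0 : 0 ≤ c := div_nonneg (Real.rpow_nonneg (by norm_num) _) h1γ.le
  set g : ℝ → ℝ := fun σ => c * ((1 - γ) * (Real.log σ - Real.log a) ^ (1 - γ - 1) * σ⁻¹)
    with hgdef
  set G : ℝ → ℝ := fun σ => c * (Real.log σ - Real.log a) ^ (1 - γ) with hGdef
  -- derivative
  have hderiv : ∀ σ ∈ Set.Icc b 1, HasDerivAt G (g σ) σ := by
    intro σ hσ
    have hσ0 : 0 < σ := hb0.trans_le hσ.1
    have hL2 := hL σ hσ
    have h1 : HasDerivAt (fun x : ℝ => Real.log x - Real.log a) σ⁻¹ σ :=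
      (Real.hasDerivAt_log hσ0.ne').sub_const _
    have h2 : HasDerivAt (fun x : ℝ => x ^ (1 - γ))
        ((1 - γ) * (Real.log σ - Real.log a) ^ (1 - γ - 1)) (Real.log σ - Real.log a) :=
      Real.hasDerivAt_rpow_const (Or.inl (by linarith))
    have := (h2.comp σ h1).const_mul c
    simpa [hgdef, mul_assoc] using this
  -- continuity of g on Icc b 1
  have hgcont : ContinuousOn g (Set.Icc b 1) := by
    have hlog : ContinuousOn (fun σ : ℝ => Real.log σ - Real.log a) (Set.Icc b 1) := by
      apply ContinuousOn.sub _ continuousOn_const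
      exact Real.continuousOn_log.mono fun x hx => by
        simp [ne_of_gt (hb0.trans_le hx.1)]
    have h1 : ContinuousOn (fun σ : ℝ => (Real.log σ - Real.log a) ^ (1 - γ - 1))
        (Set.Icc b 1) :=
      hlog.rpow_const fun x hx => Or.inl (by have := hL x hx; linarith)
    have h2 : ContinuousOn (fun σ : ℝ => σ⁻¹) (Set.Icc b 1) :=
      continuousOn_id.inv₀ fun x hx => (hb0.trans_le hx.1).ne'
    exact (continuousOn_const.mul ((continuousOn_const.mul h1).mul h2))
  have hgint : IntegrableOn g (Set.Icc b 1) := hgcont.integrableOn_Icc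
  have hgintIoo : IntegrableOn g (Set.Ioo b 1) := hgint.mono_set Set.Ioo_subset_Icc_self
  -- pointwise bound
  set f : ℝ → ℝ :=
    fun σ : ℝ => σ ^ (γ - 1) * (σ * (Real.log σ - Real.log a) - (σ - a)) ^ (-γ) with hfdef
  have hfg : ∀ σ ∈ Set.Ioo b 1, f σ ≤ g σ := by
    intro σ hσ
    have hσ0 : 0 < σ := hb0.trans hσ.1
    set L : ℝ := Real.log σ - Real.log a with hLdef
    have hL2 : 2 ≤ L := hL σ ⟨hσ.1.le, hσ.2.le⟩
    have hkey : σ * L / 2 ≤ σ * L - (σ - a) := by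
      nlinarith [mul_nonneg hσ0.le (by linarith : (0:ℝ) ≤ L - 2)]
    have hpos : 0 < σ * L / 2 := by positivity
    have hmono : (σ * L - (σ - a)) ^ (-γ) ≤ (σ * L / 2) ^ (-γ) :=
      Real.rpow_le_rpow_of_nonpos hpos hkey (by linarith)
    have heq : σ ^ (γ - 1) * (σ * L / 2) ^ (-γ) = g σ := by
      have e1 : σ * L / 2 = σ * (L * (2:ℝ)⁻¹) := by ring
      rw [e1, Real.mul_rpow hσ0.le (by positivity),
        Real.mul_rpow (by linarith : (0:ℝ) ≤ L) (by norm_num),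
        Real.inv_rpow (by norm_num), ← Real.rpow_neg (by norm_num), neg_neg]
      have e2 : σ ^ (γ - 1) * (σ ^ (-γ) * (L ^ (-γ) * (2:ℝ) ^ γ))
          = (2:ℝ) ^ γ * (L ^ (-γ) * (σ ^ (γ - 1) * σ ^ (-γ))) := by ring
      rw [e2, ← Real.rpow_add hσ0, show γ - 1 + -γ = -1 by ring, Real.rpow_neg_one]
      simp only [hgdef, hcdef]
      have : (2:ℝ) ^ γ / (1 - γ) * (1 - γ) = (2:ℝ) ^ γ :=
        div_mul_cancel₀ _ (by linarith)
      rw [show (1:ℝ) - γ - 1 = -γ by ring]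
      field_simp
      ring
    calc f σ ≤ σ ^ (γ - 1) * (σ * L / 2) ^ (-γ) := by
          exact mul_le_mul_of_nonneg_left hmono (Real.rpow_nonneg hσ0.le _)
      _ = g σ := heq
  have hfnonneg : ∀ σ ∈ Set.Ioo b 1, 0 ≤ f σ := fun σ hσ =>
    mul_nonneg (Real.rpow_nonneg (hb0.trans hσ.1).le _) (Real.rpow_nonneg (by
      have hσ0 : 0 < σ := hb0.trans hσ.1
      have hL2 : 2 ≤ Real.log σ - Real.log a := hL σ ⟨hσ.1.le, hσ.2.le⟩
      nlinarith) _)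
  -- measurability
  have hinnerpos : ∀ σ ∈ Set.Ioo b 1,
      0 < σ * (Real.log σ - Real.log a) - (σ - a) := by
    intro σ hσ
    have hσ0 : 0 < σ := hb0.trans hσ.1
    have hL2 : 2 ≤ Real.log σ - Real.log a := hL σ ⟨hσ.1.le, hσ.2.le⟩
    nlinarith
  have hfmeas : AEStronglyMeasurable f (volume.restrict (Set.Ioo b 1)) := by
    apply ContinuousOn.aestronglyMeasurable _ measurableSet_Ioo
    apply ContinuousOn.mul
    · exact continuousOn_id.rpow_const fun x hx => Or.inl (hb0.trans hx.1).ne'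
    · refine ContinuousOn.rpow_const ?_ fun x hx => Or.inl (hinnerpos x hx).ne'
      apply ContinuousOn.sub _ (continuousOn_id.sub continuousOn_const)
      exact continuousOn_id.mul ((Real.continuousOn_log.mono fun x hx => by
        simp [ne_of_gt (hb0.trans hx.1)]).sub continuousOn_const)
  -- integrability of f
  have hfint : IntegrableOn f (Set.Ioo b 1) := by
    apply Integrable.mono' hgintIoo hfmeas
    filter_upwards [ae_restrict_mem measurableSet_Ioo] with σ hσ
    rw [Real.norm_eq_abs, abs_of_nonneg (hfnonneg σ hσ)]
    exact hfg σ hσ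
  refine ⟨hfint, ?_⟩
  have step1 : ∫ σ in Set.Ioo b 1, f σ ≤ ∫ σ in Set.Ioo b 1, g σ :=
    setIntegral_mono_on hfint hgintIoo measurableSet_Ioo hfg
  have step2 : ∫ σ in Set.Ioo b 1, g σ = G 1 - G b := by
    rw [← MeasureTheory.integral_Ioc_eq_integral_Ioo,
      ← intervalIntegral.integral_of_le hb1.le]
    exact intervalIntegral.integral_eq_sub_of_hasDerivAt
      (fun x hx => hderiv x (by rwa [Set.uIcc_of_le hb1.le] at hx))
      (hgcont.mono (by rw [Set.uIcc_of_le hb1.le]) |>.intervalIntegrable)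
  have hGb : 0 ≤ G b := by
    apply mul_nonneg hc0
    apply Real.rpow_nonneg
    rw [hlogb]; linarith
  have hG1 : G 1 = c * Real.log (1 / a) ^ (1 - γ) := by
    simp [hGdef, one_div, Real.log_inv]
  calc ∫ σ in Set.Ioo b 1, f σ ≤ G 1 - G b := step1.trans_eq step2
    _ ≤ G 1 := by linarith
    _ = c * Real.log (1 / a) ^ (1 - γ) := hG1
end

section
/- Let γ ∈ (0,1/2). There exists a constant C = C(γ) < ∞ such that for every a ∈ (0, e^{-2}), ∫_{a}^{e²a} σ^{γ−1} · (σ·(log σ − log a) − (σ − a))^{−γ} dσ ≤ C. (One may take C = 2^γ · ∫_{1}^{e²} β^γ (β−1)^{−2γ} dβ, which is finite and independent of a.) -/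
/-!
Applying `log (1 - x) ≤ -x - x² / 2` to `x = (σ - a) / σ` bounds the bracket
`σ (log σ - log a) - (σ - a)` from below by `(σ - a)² / (2σ)`. Hence the integrand is at most
`2^γ σ^(2γ-1) (σ - a)^(-2γ) ≤ 2^γ a^(2γ-1) (σ - a)^(-2γ)`, which is integrable because `2γ < 1`,
and whose integral over `(a, c a)` is `2^γ (c - 1)^(1-2γ) / (1 - 2γ)`: the powers of `a` cancel.
-/

open MeasureTheory Real Set

theorem add_sq_div_two_le_neg_log_one_sub {x : ℝ} (h₀ : 0 ≤ x) (h₁ : x < 1) :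
    x + x ^ 2 / 2 ≤ -log (1 - x) := by
  have hsum := hasSum_pow_div_log_of_abs_lt_one (abs_lt.2 ⟨by linarith, h₁⟩)
  have := sum_le_hasSum (Finset.range 2) (fun n _ => by positivity) hsum
  norm_num [Finset.sum_range_succ] at this
  exact this

theorem sq_div_two_mul_le_mul_log_sub {a σ : ℝ} (ha : 0 < a) (haσ : a ≤ σ) :
    (σ - a) ^ 2 / (2 * σ) ≤ σ * (log σ - log a) - (σ - a) := by
  have hσ : 0 < σ := ha.trans_le haσ
  have hx := add_sq_div_two_le_neg_log_one_sub (x := (σ - a) / σ)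
    (div_nonneg (sub_nonneg.2 haσ) hσ.le) ((div_lt_one hσ).2 (by linarith))
  rw [show 1 - (σ - a) / σ = a / σ by field_simp; ring, log_div ha.ne' hσ.ne', neg_sub] at hx
  have := mul_le_mul_of_nonneg_left hx hσ.le
  calc (σ - a) ^ 2 / (2 * σ) = σ * ((σ - a) / σ + ((σ - a) / σ) ^ 2 / 2) - (σ - a) := by
        field_simp; ring
    _ ≤ _ := by linarith

theorem mul_log_sub_sub_pos {a σ : ℝ} (ha : 0 < a) (haσ : a < σ) :
    0 < σ * (log σ - log a) - (σ - a) :=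
  (div_pos (pow_pos (sub_pos.2 haσ) 2) (by linarith)).trans_le
    (sq_div_two_mul_le_mul_log_sub ha haσ.le)

theorem integrableOn_Ioo_rpow_sub {a b r : ℝ} (hab : a ≤ b) (hr : -1 < r) :
    IntegrableOn (fun σ => (σ - a) ^ r) (Ioo a b) := by
  have h := (intervalIntegral.intervalIntegrable_rpow' (a := 0) (b := b - a) hr).comp_sub_right a
  rw [zero_add, sub_add_cancel, intervalIntegrable_iff_integrableOn_Ioo_of_le hab] at h
  exact h

theorem integral_Ioo_rpow_sub {a b r : ℝ} (hab : a ≤ b) (hr : -1 < r) :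
    ∫ σ in Ioo a b, (σ - a) ^ r = (b - a) ^ (r + 1) / (r + 1) := by
  rw [← integral_Ioc_eq_integral_Ioo, ← intervalIntegral.integral_of_le hab,
    intervalIntegral.integral_comp_sub_right (fun x => x ^ r), sub_self, integral_rpow (.inl hr),
    zero_rpow (by linarith), sub_zero]

theorem rpow_mul_log_sub_rpow_le {γ a σ : ℝ} (hγ₀ : 0 ≤ γ) (hγ₁ : 2 * γ ≤ 1) (ha : 0 < a) (haσ : a < σ) :
    σ ^ (γ - 1) * (σ * (log σ - log a) - (σ - a)) ^ (-γ)
      ≤ 2 ^ γ * a ^ (2 * γ - 1) * (σ - a) ^ (-(2 * γ)) := by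
  have hσ : 0 < σ := ha.trans haσ
  have hσa : 0 < σ - a := sub_pos.2 haσ
  have hlower : ((σ - a) ^ 2 / (2 * σ)) ^ (-γ) = (2 * σ) ^ γ * (σ - a) ^ (-(2 * γ)) := by
    rw [div_rpow (by positivity) (by positivity), ← rpow_natCast, ← rpow_mul hσa.le,
      rpow_neg (by positivity), div_eq_mul_inv, inv_inv, mul_comm]
    push_cast; ring_nf
  have hpow : σ ^ (γ - 1) * (2 * σ) ^ γ = 2 ^ γ * σ ^ (2 * γ - 1) := by
    rw [mul_rpow zero_le_two hσ.le, mul_left_comm, ← rpow_add hσ]; ring_nf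
  calc σ ^ (γ - 1) * (σ * (log σ - log a) - (σ - a)) ^ (-γ)
      ≤ σ ^ (γ - 1) * ((σ - a) ^ 2 / (2 * σ)) ^ (-γ) := by
        refine mul_le_mul_of_nonneg_left ?_ (by positivity)
        exact rpow_le_rpow_of_nonpos (by positivity) (sq_div_two_mul_le_mul_log_sub ha haσ.le)
          (neg_nonpos.2 hγ₀)
    _ = 2 ^ γ * σ ^ (2 * γ - 1) * (σ - a) ^ (-(2 * γ)) := by rw [hlower, ← mul_assoc, hpow]
    _ ≤ 2 ^ γ * a ^ (2 * γ - 1) * (σ - a) ^ (-(2 * γ)) := by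
        have := rpow_le_rpow_of_nonpos ha haσ.le (by linarith : 2 * γ - 1 ≤ 0)
        gcongr

theorem continuousOn_rpow_mul_log_sub_rpow {γ a : ℝ} (ha : 0 < a) :
    ContinuousOn (fun σ => σ ^ (γ - 1) * (σ * (log σ - log a) - (σ - a)) ^ (-γ)) (Ioi a) := by
  intro σ (haσ : a < σ)
  have hσ : 0 < σ := ha.trans haσ
  refine ContinuousAt.continuousWithinAt ?_
  exact (continuousAt_id.rpow_const (.inl hσ.ne')).mul <|
    ((continuousAt_id.mul ((continuousAt_log hσ.ne').sub continuousAt_const)).sub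
      (continuousAt_id.sub continuousAt_const)).rpow_const (.inl (mul_log_sub_sub_pos ha haσ).ne')

theorem integrableOn_Ioo_mul_and_setIntegral_le {γ a c : ℝ} (hγ₀ : 0 ≤ γ) (hγ₁ : γ < 1 / 2)
    (ha : 0 < a) (hc : 1 ≤ c) :
    IntegrableOn (fun σ => σ ^ (γ - 1) * (σ * (log σ - log a) - (σ - a)) ^ (-γ))
        (Ioo a (c * a)) ∧
      ∫ σ in Ioo a (c * a), σ ^ (γ - 1) * (σ * (log σ - log a) - (σ - a)) ^ (-γ)
        ≤ 2 ^ γ * (c - 1) ^ (1 - 2 * γ) / (1 - 2 * γ) := by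
  set f := fun σ => σ ^ (γ - 1) * (σ * (log σ - log a) - (σ - a)) ^ (-γ)
  have hac : a ≤ c * a := le_mul_of_one_le_left ha.le hc
  have hr : -1 < -(2 * γ) := by linarith
  have hg := (integrableOn_Ioo_rpow_sub hac hr).const_mul (2 ^ γ * a ^ (2 * γ - 1))
  have hfg : ∀ σ ∈ Ioo a (c * a), f σ ≤ 2 ^ γ * a ^ (2 * γ - 1) * (σ - a) ^ (-(2 * γ)) :=
    fun σ hσ => rpow_mul_log_sub_rpow_le hγ₀ (by linarith) ha hσ.1
  have hf : IntegrableOn f (Ioo a (c * a)) := by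
    refine hg.mono' (((continuousOn_rpow_mul_log_sub_rpow ha).mono
      Ioo_subset_Ioi_self).aestronglyMeasurable measurableSet_Ioo) ?_
    filter_upwards [ae_restrict_mem measurableSet_Ioo] with σ hσ
    rw [norm_of_nonneg (mul_nonneg (rpow_nonneg (ha.trans hσ.1).le _)
      (rpow_nonneg (mul_log_sub_sub_pos ha hσ.1).le _))]
    exact hfg σ hσ
  refine ⟨hf, (setIntegral_mono_on hf hg measurableSet_Ioo hfg).trans_eq ?_⟩
  rw [integral_const_mul, integral_Ioo_rpow_sub hac hr, show c * a - a = (c - 1) * a by ring,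
    mul_rpow (by linarith) ha.le]
  have ha_cancel : a ^ (2 * γ - 1) * a ^ (-(2 * γ) + 1) = 1 := by
    rw [← rpow_add ha]; ring_nf; exact rpow_zero a
  rw [show -(2 * γ) + 1 = 1 - 2 * γ by ring] at ha_cancel ⊢
  linear_combination (2 ^ γ * (c - 1) ^ (1 - 2 * γ) / (1 - 2 * γ)) * ha_cancel

theorem stmt_7 (γ : ℝ) (hγ : γ ∈ Set.Ioo (0 : ℝ) (1 / 2)) :
    ∃ C : ℝ, ∀ a ∈ Set.Ioo (0 : ℝ) (Real.exp (-2)),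
      MeasureTheory.IntegrableOn
        (fun σ : ℝ => σ ^ (γ - 1) * (σ * (Real.log σ - Real.log a) - (σ - a)) ^ (-γ))
        (Set.Ioo a (Real.exp 2 * a)) ∧
      ∫ σ in Set.Ioo a (Real.exp 2 * a),
          σ ^ (γ - 1) * (σ * (Real.log σ - Real.log a) - (σ - a)) ^ (-γ)
        ≤ C :=
  ⟨_, fun _ ha => integrableOn_Ioo_mul_and_setIntegral_le hγ.1.le hγ.2 ha.1
    (one_le_exp zero_le_two)⟩
end
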